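/- Let S be a commutative semiring with 0 and 1, n ≥ 1 and Σ an alphabet. For all u, v ∈ Σ* and every path π in Γ_{n,Σ}, one has f_π^{uv} = Σ_{π = αβ} f_α^u · f_β^v as formal polynomials in S[X_{n,Σ}], where the sum ranges over all factorizations of π into a path α followed by a path β (including empty factors). Moreover, for the empty word ε, f_π^ε = 1 if π is an empty path and f_π^ε = 0 otherwise. Consequently, the map ρ : Σ* → (paths of Γ_{n,Σ} → S[X_{n,Σ}]), w ↦ (π ↦ f_π^w), is a monoid homomorphism into the multiplicative monoid given by the convolution product (fg)(π) = Σ_{π = αβ} f(α)g(β) with identity the indicator of empty paths. -/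

import Mathlib

attribute [local instance] Classical.propDecidable

open scoped BigOperators

/-- The submonoid of upper triangular `n × n` matrices over `S`. -/
def UT (n : ℕ) (S : Type*) [CommSemiring S] : Submonoid (Matrix (Fin n) (Fin n) S) where
  carrier := {A | ∀ i j : Fin n, j < i → A i j = 0}
  one_mem' := fun i j hij => Matrix.one_apply_ne (ne_of_gt hij)
  mul_mem' := by
    intro a b ha hb i j hij
    rw [Matrix.mul_apply]
    apply Finset.sum_eq_zero
    intro k _
    rcases lt_or_ge k i with h | h
    · rw [ha i k h, zero_mul]
    · rw [hb k j (lt_of_lt_of_le hij h), mul_zero]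

/-- A path in the loop-free quiver `Γ_{n,Σ}`: a start vertex together with a list of
labelled edges, the visited vertices being strictly increasing. -/
structure QPath (n : ℕ) (A : Type*) where
  start : Fin n
  steps : List (A × Fin n)
  chain : List.Chain' (· < ·) (start :: steps.map Prod.snd)

namespace QPath

variable {n : ℕ} {A : Type*}

/-- The `j`-th vertex visited by the path. -/
def vtx (π : QPath n A) (j : ℕ) : Fin n :=
  (π.start :: π.steps.map Prod.snd).getD j π.start

/-- The label of a path. -/
def label (π : QPath n A) : List A := π.steps.map Prod.fst

/-- The final vertex of a path. -/
def last (π : QPath n A) : Fin n := π.vtx π.steps.length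

end QPath

/-- `p` is an occurrence of the path `π` in the word `w`. -/
def IsOcc {n : ℕ} {A : Type*} (π : QPath n A) (w : List A)
    (p : Fin π.steps.length → Fin w.length) : Prop :=
  (∀ j k, j < k → p j < p k) ∧ ∀ j, w.get (p j) = (π.steps.get j).1

/-- The monomial corresponding to an occurrence. -/
noncomputable def occMonomial (S : Type*) [CommSemiring S] {n : ℕ} {A : Type*}
    (π : QPath n A) (w : List A) (p : Fin π.steps.length → Fin w.length) :
    MvPolynomial (A × Fin n) S :=
  ∏ i : Fin w.length,
    if ∃ j, p j = i then 1
    else MvPolynomial.X (w.get i, π.vtx (Finset.univ.filter (fun j => p j < i)).card)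

/-- The formal polynomial `f_π^w`. -/
noncomputable def fPoly (S : Type*) [CommSemiring S] {n : ℕ} {A : Type*}
    (π : QPath n A) (w : List A) : MvPolynomial (A × Fin n) S :=
  ∑ p ∈ Finset.univ.filter (IsOcc π w), occMonomial S π w p

namespace QPath
variable {n : ℕ} {A : Type*}

/-- The initial segment of a path consisting of its first `j` edges. -/
def take (π : QPath n A) (j : ℕ) : QPath n A :=
  ⟨π.start, π.steps.take j, by
    have h : (π.start :: (π.steps.take j).map Prod.snd) =
        (π.start :: π.steps.map Prod.snd).take (j + 1) := by
      simp [List.map_take]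
    rw [h]
    exact π.chain.take _⟩

/-- The final segment of a path obtained by removing its first `j` edges. -/
def drop (π : QPath n A) (j : ℕ) : QPath n A :=
  ⟨π.vtx j, π.steps.drop j, by
    rcases le_or_gt j π.steps.length with hj | hj
    · have hlen : j < (π.start :: π.steps.map Prod.snd).length := by
        simp; omega
      have h : π.vtx j :: (π.steps.drop j).map Prod.snd =
          (π.start :: π.steps.map Prod.snd).drop j := by
        rw [List.map_drop, List.drop_eq_getElem_cons hlen, List.drop_succ_cons]
        congr 1
        exact List.getD_eq_getElem _ _ hlen
      rw [h]
      exact π.chain.drop _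
    · have h : π.steps.drop j = [] := List.drop_eq_nil_of_le (by omega)
      rw [h]
      exact List.isChain_singleton _⟩

end QPath

/-! Reading the word letter by letter: in an occurrence of `π` in `a :: w` the first letter is
either skipped, contributing the variable `a_{v₀}` at the start vertex `v₀`, or matched with the
first edge of `π`. Hence `f_π^{a w} = a_{v₀} f_π^w + [a = τ₁] f_{π'}^w`, where `π'` is `π` without
its first edge, and the factorisation of `f_π^{u v}` follows by induction on `u`, the case of the
empty word being the unit of the convolution. -/

namespace QPath

variable {n : ℕ} {A : Type*}

theorem ext {π ρ : QPath n A} (hs : π.start = ρ.start) (he : π.steps = ρ.steps) : π = ρ := by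
  cases π; cases ρ; subst hs he; rfl

@[simp] theorem take_start (π : QPath n A) (j : ℕ) : (π.take j).start = π.start := rfl

theorem drop_zero (π : QPath n A) : π.drop 0 = π := ext rfl rfl

-- `vtx` falls back to the start vertex out of range, hence the bound.
theorem vtx_drop_one (π : QPath n A) {c : ℕ} (hc : c < π.steps.length) :
    (π.drop 1).vtx c = π.vtx (c + 1) := by
  obtain ⟨s, _ | ⟨e, rest⟩, h⟩ := π
  · simp at hc
  · have hc' : c < (e.2 :: rest.map Prod.snd).length := by simpa using hc
    simp only [vtx, drop, List.drop_succ_cons, List.drop_zero, List.map_cons,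
      List.getD_cons_succ, List.getD_cons_zero]
    rw [List.getD_eq_getElem _ _ hc', List.getD_eq_getElem _ _ hc']

theorem drop_one_take (π : QPath n A) (j : ℕ) : (π.take (j + 1)).drop 1 = (π.drop 1).take j := by
  obtain ⟨s, _ | ⟨e, rest⟩, h⟩ := π <;> exact ext rfl (by simp [take, drop])

theorem drop_drop_one (π : QPath n A) {j : ℕ} (hj : j < π.steps.length) :
    (π.drop 1).drop j = π.drop (j + 1) :=
  ext (vtx_drop_one π hj) (by simp [drop])

end QPath

section Occurrences

open Finset MvPolynomial

variable {S : Type*} [CommSemiring S] {n : ℕ} {A : Type*}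

theorem isOcc_succ_comp_iff (π : QPath n A) (a : A) (w : List A)
    (q : Fin π.steps.length → Fin w.length) :
    IsOcc π (a :: w) (Fin.succ ∘ q) ↔ IsOcc π w q := by
  simp [IsOcc]

theorem occMonomial_succ_comp (π : QPath n A) (a : A) (w : List A)
    (q : Fin π.steps.length → Fin w.length) :
    occMonomial S π (a :: w) (Fin.succ ∘ q) = X (a, π.start) * occMonomial S π w q := by
  simp [occMonomial, Fin.prod_univ_succ, QPath.vtx]

theorem sum_occMonomial_cons_avoiding_zero (π : QPath n A) (a : A) (w : List A) :
    ∑ p ∈ univ.filter (fun p => IsOcc π (a :: w) p ∧ ¬∃ j, (p j : ℕ) = 0),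
      occMonomial S π (a :: w) p = X (a, π.start) * fPoly S π w := by
  rw [fPoly, mul_sum]
  symm
  refine sum_bij (fun q _ => Fin.succ ∘ q) (fun q hq => ?_)
    (fun _ _ _ _ h => (Fin.succ_injective _).comp_left h) (fun p hp => ?_)
    (fun q _ => (occMonomial_succ_comp π a w q).symm)
  · exact mem_filter.mpr ⟨mem_univ _, (isOcc_succ_comp_iff π a w q).mpr (mem_filter.mp hq).2,
      by simp⟩
  · simp only [mem_filter, mem_univ, true_and, not_exists] at hp
    obtain ⟨hocc, hne⟩ := hp
    have hsucc : Fin.succ ∘ (fun j => (p j).pred fun h0 => hne j (by simp [h0])) = p :=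
      funext fun j => Fin.succ_pred _ _
    rw [← hsucc, isOcc_succ_comp_iff] at hocc
    exact ⟨_, mem_filter.mpr ⟨mem_univ _, hocc⟩, hsucc⟩

section ConsPath

variable (s : Fin n) (e : A × Fin n) (rest : List (A × Fin n))
  (h : List.Chain' (· < ·) (s :: (e :: rest).map Prod.snd))

theorem isOcc_cons_zero_iff (a : A) (w : List A) (q : Fin rest.length → Fin w.length) :
    IsOcc ⟨s, e :: rest, h⟩ (a :: w) (Fin.cons 0 (Fin.succ ∘ q)) ↔
      a = e.1 ∧ IsOcc (QPath.drop ⟨s, e :: rest, h⟩ 1) w q := by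
  simp [IsOcc, Fin.forall_fin_succ, QPath.drop]
  exact and_left_comm

theorem occMonomial_cons_zero (a : A) (w : List A) (q : Fin rest.length → Fin w.length) :
    occMonomial S ⟨s, e :: rest, h⟩ (a :: w) (Fin.cons 0 (Fin.succ ∘ q)) =
      occMonomial S (QPath.drop ⟨s, e :: rest, h⟩ 1) w q := by
  simp [occMonomial, Fin.prod_univ_succ, Fin.exists_fin_succ, Fin.card_filter_univ_succ,
    eq_comm (a := (0 : Fin _))]
  refine prod_congr rfl fun i _ => ?_
  have hc : #{j | q j < i} < (e :: rest).length :=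
    Nat.lt_succ_of_le ((card_filter_le _ _).trans (by simp))
  congr 3
  exact (QPath.vtx_drop_one ⟨s, e :: rest, h⟩ hc).symm

theorem sum_occMonomial_cons_hitting_zero (a : A) (w : List A) :
    ∑ p ∈ univ.filter (fun p => IsOcc ⟨s, e :: rest, h⟩ (a :: w) p ∧ ∃ j, (p j : ℕ) = 0),
      occMonomial S ⟨s, e :: rest, h⟩ (a :: w) p =
      if a = e.1 then fPoly S (QPath.drop ⟨s, e :: rest, h⟩ 1) w else 0 := by
  have hite : (if a = e.1 then fPoly S (QPath.drop ⟨s, e :: rest, h⟩ 1) w else 0) =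
      ∑ q ∈ univ.filter (fun q => a = e.1 ∧ IsOcc (QPath.drop ⟨s, e :: rest, h⟩ 1) w q),
        occMonomial S (QPath.drop ⟨s, e :: rest, h⟩ 1) w q := by
    split_ifs with ha <;> simp [fPoly, ha]
  rw [hite]
  symm
  refine sum_bij (fun q _ => Fin.cons 0 (Fin.succ ∘ q)) (fun q hq => ?_)
    (fun _ _ _ _ hq => (Fin.succ_injective _).comp_left (Fin.cons_right_injective _ hq))
    (fun p hp => ?_) (fun q _ => (occMonomial_cons_zero s e rest h a w q).symm)
  · exact mem_filter.mpr ⟨mem_univ _,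
      (isOcc_cons_zero_iff s e rest h a w q).mpr (mem_filter.mp hq).2, ⟨0, rfl⟩⟩
  · simp only [mem_filter, mem_univ, true_and] at hp
    obtain ⟨hocc, j₀, hj₀⟩ := hp
    have hmono : StrictMono p := fun j k => hocc.1 j k
    have hp0 : (p 0 : ℕ) = 0 := Nat.eq_zero_of_le_zero (hj₀ ▸ hmono.monotone (Fin.zero_le j₀))
    have hpos (i : Fin rest.length) : p i.succ ≠ 0 := fun h0 => by
      have := hmono (Fin.succ_pos i)
      simp [h0] at this
    have hcons : Fin.cons 0 (Fin.succ ∘ fun i => (p i.succ).pred (hpos i)) = p :=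
      funext fun j => Fin.cases (Fin.ext hp0.symm) (fun i => Fin.succ_pred (p i.succ) (hpos i)) j
    rw [← hcons, isOcc_cons_zero_iff] at hocc
    exact ⟨_, mem_filter.mpr ⟨mem_univ _, hocc⟩, hcons⟩

end ConsPath

theorem fPoly_nil (π : QPath n A) : fPoly S π [] = if π.steps = [] then 1 else 0 := by
  obtain ⟨s, _ | ⟨e, rest⟩, h⟩ := π
  · have hocc (p) : IsOcc ⟨s, [], h⟩ [] p := ⟨fun j => j.elim0, fun j => j.elim0⟩
    simp [fPoly, occMonomial, hocc]
  · simp [fPoly]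

theorem fPoly_cons (π : QPath n A) (a : A) (w : List A) :
    fPoly S π (a :: w) = X (a, π.start) * fPoly S π w +
      if π.label.head? = some a then fPoly S (π.drop 1) w else 0 := by
  rw [fPoly, ← sum_filter_add_sum_filter_not _ (fun p => ∃ j, (p j : ℕ) = 0), filter_filter,
    filter_filter, add_comm, sum_occMonomial_cons_avoiding_zero]
  congr 1
  obtain ⟨s, _ | ⟨e, rest⟩, h⟩ := π
  · simp [QPath.label]
  · rw [sum_occMonomial_cons_hitting_zero]
    simp [QPath.label, eq_comm]

theorem fPoly_append (u v : List A) (π : QPath n A) :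
    fPoly S π (u ++ v) =
      ∑ j ∈ range (π.steps.length + 1), fPoly S (π.take j) u * fPoly S (π.drop j) v := by
  induction u generalizing π with
  | nil =>
    have hterm (j) (hj : j ∈ range π.steps.length) :
        fPoly S (π.take (j + 1)) [] * fPoly S (π.drop (j + 1)) v = 0 := by
      rw [fPoly_nil, if_neg, zero_mul]
      simp only [QPath.take, List.take_eq_nil_iff]
      rintro (h | h) <;> simp_all
    rw [List.nil_append, sum_range_succ', sum_eq_zero hterm, fPoly_nil,
      if_pos (show (π.take 0).steps = [] from rfl), one_mul, zero_add, QPath.drop_zero]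
  | cons a u ih =>
    rw [List.cons_append, fPoly_cons, ih π, ih (π.drop 1)]
    simp_rw [fPoly_cons (π.take _), add_mul, sum_add_distrib, mul_sum, mul_assoc,
      QPath.take_start]
    congr 1
    rcases hs : π.steps with _ | ⟨e, rest⟩
    · simp [QPath.label, QPath.take, hs]
    · have hlen' : (π.drop 1).steps.length = rest.length := by simp [QPath.drop, hs]
      have hhead (j) : (π.take (j + 1)).label.head? = some e.1 := by
        simp [QPath.label, QPath.take, hs]
      have hhead₀ : (π.take 0).label.head? = none := rfl
      have hheadπ : π.label.head? = some e.1 := by simp [QPath.label, hs]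
      rw [hlen', List.length_cons, sum_range_succ' _ (rest.length + 1)]
      simp only [hhead, hhead₀, hheadπ, QPath.drop_one_take, reduceCtorEq, if_false, zero_mul,
        add_zero]
      split_ifs
      · refine sum_congr rfl fun j hj => ?_
        rw [QPath.drop_drop_one π (by simpa [hs] using hj)]
      · simp

end Occurrences

theorem fPoly_convolution_morphism_general {S : Type*} [CommSemiring S]
    {n : ℕ} {A : Type*} :
    (∀ (u v : List A) (π : QPath n A),
        fPoly S π (u ++ v) =
          ∑ j ∈ Finset.range (π.steps.length + 1),
            fPoly S (π.take j) u * fPoly S (π.drop j) v) ∧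
    (∀ π : QPath n A,
        fPoly S π ([] : List A) = if π.steps = [] then 1 else 0) :=
  ⟨fPoly_append, fPoly_nil⟩

/-- `f_π^{uv} = Σ_{π = αβ} f_α^u f_β^v` (the factorisations of `π` being
exactly the pairs `(π.take j, π.drop j)` for `0 ≤ j ≤ |π|`), and `f_π^ε` is `1` on empty
paths and `0` otherwise; that is, `w ↦ (π ↦ f_π^w)` is a monoid homomorphism from `Σ*` to
the multiplicative monoid given by the convolution product on path-indexed families. -/
theorem fPoly_convolution_morphism {S : Type*} [CommSemiring S] [Nontrivial S]
    {n : ℕ} (hn : 1 ≤ n) {A : Type*} :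
    (∀ (u v : List A) (π : QPath n A),
        fPoly S π (u ++ v) =
          ∑ j ∈ Finset.range (π.steps.length + 1),
            fPoly S (π.take j) u * fPoly S (π.drop j) v) ∧
    (∀ π : QPath n A,
        fPoly S π ([] : List A) = if π.steps = [] then 1 else 0) :=
  fPoly_convolution_morphism_general
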